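/- The function ψ is strictly monotonically increasing on [0, ∞). -/

import Mathlib

open Real Finset

/-- Normalized residual of the `i`-th Taylor approximation of the exponential:
`R_i(x) = (exp x − ∑_{j=0}^{i} x^j/j!) / exp x`. -/
noncomputable def Rres (i : ℕ) (x : ℝ) : ℝ :=
  (Real.exp x - ∑ j ∈ Finset.range (i + 1), x ^ j / (Nat.factorial j : ℝ)) / Real.exp x

/-- Expected crawl-interval length `ψ(ι) = ∑_{i=0}^{⌊ι/β⌋} (1/γ)·R_i(γ(ι − iβ))`. -/
noncomputable def psi (γ β : ℝ) (ι : ℝ) : ℝ :=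
  ∑ i ∈ Finset.range (⌊ι / β⌋₊ + 1), (1 / γ) * Rres i (γ * (ι - (i : ℝ) * β))

/-!
`R_i(x) = 1 - e^{-x} ∑_{j ≤ i} x^j/j!` has derivative `e^{-x} x^i/i!`, since differentiating the
Taylor polynomial drops its top term; so `R_i` increases strictly on `[0, ∞)` from `R_i(0) = 0`.
As `ι` grows, every summand of `ψ` present at `ι` strictly increases, and the summands that
appear when `⌊ι/β⌋` jumps are nonnegative.
-/

lemma hasDerivAt_pow_succ_div_factorial (n : ℕ) (x : ℝ) :
    HasDerivAt (fun x : ℝ => x ^ (n + 1) / ((n + 1).factorial : ℝ))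
      (x ^ n / (n.factorial : ℝ)) x := by
  refine ((hasDerivAt_pow (n + 1) x).div_const ((n + 1).factorial : ℝ)).congr_deriv ?_
  rw [Nat.factorial_succ]
  push_cast
  field_simp

lemma hasDerivAt_sum_range_pow_div_factorial (n : ℕ) (x : ℝ) :
    HasDerivAt (fun x : ℝ => ∑ j ∈ range (n + 1), x ^ j / (j.factorial : ℝ))
      (∑ j ∈ range n, x ^ j / (j.factorial : ℝ)) x := by
  induction n with
  | zero => simpa using hasDerivAt_const x (1 : ℝ)
  | succ n ih =>
    simp only [sum_range_succ _ (n + 1), sum_range_succ _ n] at ih ⊢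
    exact ih.add (hasDerivAt_pow_succ_div_factorial n x)

lemma Rres_eq_one_sub (i : ℕ) (x : ℝ) :
    Rres i x = 1 - (∑ j ∈ range (i + 1), x ^ j / (j.factorial : ℝ)) * exp (-x) := by
  rw [Rres, exp_neg]
  field_simp

lemma hasDerivAt_Rres (i : ℕ) (x : ℝ) :
    HasDerivAt (Rres i) (x ^ i / (i.factorial : ℝ) * exp (-x)) x := by
  have hexp : HasDerivAt (fun x : ℝ => exp (-x)) (-exp (-x)) x := by
    simpa using (hasDerivAt_neg x).exp
  have h := ((hasDerivAt_sum_range_pow_div_factorial i x).mul hexp).const_sub 1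
  rw [funext (Rres_eq_one_sub i)]
  refine h.congr_deriv ?_
  rw [sum_range_succ]
  ring

lemma Rres_zero_right (i : ℕ) : Rres i 0 = 0 := by
  simp [Rres_eq_one_sub, sum_range_succ']

lemma strictMonoOn_Rres (i : ℕ) : StrictMonoOn (Rres i) (Set.Ici 0) := by
  refine strictMonoOn_of_deriv_pos (convex_Ici 0)
    (fun x _ => (hasDerivAt_Rres i x).continuousAt.continuousWithinAt) fun x hx => ?_
  rw [interior_Ici, Set.mem_Ioi] at hx
  rw [(hasDerivAt_Rres i x).deriv]
  positivity

lemma strictMonoOn_sum_range_floor_sub {f : ℕ → ℝ → ℝ} {β : ℝ} (hβ : 0 < β)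
    (hf : ∀ i, StrictMonoOn (f i) (Set.Ici 0)) (hf0 : ∀ i, 0 ≤ f i 0) :
    StrictMonoOn (fun ι => ∑ i ∈ range (⌊ι / β⌋₊ + 1), f i (ι - i * β)) (Set.Ici 0) := by
  intro a ha b hb hab
  rw [Set.mem_Ici] at ha hb
  have mul_le_of_le_floor {c : ℝ} (hc : 0 ≤ c) {i : ℕ} (hi : i < ⌊c / β⌋₊ + 1) : i * β ≤ c :=
    (le_div_iff₀ hβ).1 ((Nat.le_floor_iff (by positivity)).1 (Nat.lt_succ_iff.1 hi))
  have hfloor : ⌊a / β⌋₊ ≤ ⌊b / β⌋₊ := Nat.floor_le_floor (by gcongr)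
  calc ∑ i ∈ range (⌊a / β⌋₊ + 1), f i (a - i * β)
      < ∑ i ∈ range (⌊a / β⌋₊ + 1), f i (b - i * β) := by
        refine sum_lt_sum_of_nonempty nonempty_range_add_one fun i hi => ?_
        have hia := mul_le_of_le_floor ha (mem_range.1 hi)
        exact hf i (by simpa using hia) (by simp; linarith) (by linarith)
    _ ≤ ∑ i ∈ range (⌊b / β⌋₊ + 1), f i (b - i * β) := by
        refine sum_le_sum_of_subset_of_nonneg (range_subset_range.2 (by omega))
          fun i hi _ => ?_
        have hib := mul_le_of_le_floor hb (mem_range.1 hi)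
        exact (hf0 i).trans ((hf i).monotoneOn Set.self_mem_Ici (by simpa using hib)
          (by simpa using hib))

/-- The function `ψ` is strictly monotonically increasing on `[0, ∞)`. -/
theorem stmt_5 (γ β : ℝ) (hγ : 0 < γ) (hβ : 0 < β) :
    StrictMonoOn (psi γ β) (Set.Ici (0 : ℝ)) := by
  have hscaled (i : ℕ) : StrictMonoOn (fun x => 1 / γ * Rres i (γ * x)) (Set.Ici 0) := by
    intro x hx y hy hxy
    rw [Set.mem_Ici] at hx hy
    have hR := strictMonoOn_Rres i (Set.mem_Ici.2 (by positivity)) (Set.mem_Ici.2 (by positivity))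
      (mul_lt_mul_of_pos_left hxy hγ)
    exact mul_lt_mul_of_pos_left hR (by positivity)
  exact strictMonoOn_sum_range_floor_sub hβ hscaled fun i => by simp [Rres_zero_right]
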